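/- Fix m ∈ ℕ and let S be an m × m matrix with entries in ℕ such that S_{ii} = 0 for all i and for every μ the μ-th row sum equals the μ-th column sum (Σ_ν S_{μν} = Σ_ν S_{νμ}). Then S is a finite sum of cycle matrices; equivalently, S belongs to the additive submonoid of m × m matrices over ℕ generated by the cycle matrices. -/

import Mathlib

/-!
If `S ≠ 0`, call `i` active when row `i` of `S` is nonzero. Since row and column sums agree,
every edge `i → j` of the support digraph (`S i j ≠ 0`) ends at an active vertex, so choosing an
outgoing edge at each active vertex gives a self-map of the finite set of active vertices. The
orbit of a periodic point of this map is a directed cycle without repeated vertices, of length at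
least 2 because `S` has zero diagonal, and its cycle matrix `C` satisfies `C ≤ S` entrywise.
Subtracting `C` keeps both hypotheses and lowers the sum of the entries, so induction on that sum
writes `S` as a sum of cycle matrices.
-/

/-- A cycle matrix: `E_{l(0) l(1)} + E_{l(1) l(2)} + … + E_{l(p−1) l(0)}` for some
`p ≥ 2` and injective `l : Fin p → Fin m`. -/
def IsCycleMatrix {m : ℕ} (C : Matrix (Fin m) (Fin m) ℕ) : Prop :=
  ∃ (p : ℕ) (hp : 2 ≤ p) (l : Fin p → Fin m), Function.Injective l ∧
    C = ∑ i : Fin p, Matrix.single (l i) (l (i + ⟨1, by omega⟩)) 1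

open Function Finset

theorem Function.periodicPts_nonempty {α : Type*} [Finite α] [Nonempty α] (f : α → α) :
    (periodicPts f).Nonempty := by
  let x := Classical.arbitrary α
  obtain ⟨a, b, hne, heq⟩ := Finite.exists_ne_map_eq_of_infinite (f^[·] x)
  wlog hab : a < b generalizing a b
  · exact this b a hne.symm heq.symm (by omega)
  refine ⟨f^[a] x, mk_mem_periodicPts (n := b - a) (by omega) ?_⟩
  rw [IsPeriodicPt, IsFixedPt, ← iterate_add_apply, Nat.sub_add_cancel hab.le]
  exact heq.symm

theorem exists_injective_cycle {α : Type*} [Finite α] [Nonempty α] {r : α → α → Prop}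
    (hsucc : ∀ x, ∃ y, r x y) (hirrefl : ∀ x, ¬r x x) :
    ∃ (p : ℕ) (hp : 2 ≤ p) (l : Fin p → α), Injective l ∧
      ∀ k, r (l k) (l (k + ⟨1, by omega⟩)) := by
  choose f hf using hsucc
  obtain ⟨y, hy⟩ := periodicPts_nonempty f
  have hp : 2 ≤ minimalPeriod f y := by
    have hpos := minimalPeriod_pos_of_mem_periodicPts hy
    have hne : minimalPeriod f y ≠ 1 := fun h ↦
      hirrefl y (by simpa only [(minimalPeriod_eq_one_iff_isFixedPt.mp h).eq] using hf y)
    omega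
  refine ⟨minimalPeriod f y, hp, fun k ↦ f^[k] y, fun i j h ↦ Fin.ext ?_, fun k ↦ ?_⟩
  · exact iterate_injOn_Iio_minimalPeriod i.2 j.2 h
  · simpa [Fin.val_add, iterate_mod_minimalPeriod_eq, iterate_succ_apply'] using hf (f^[k] y)

namespace Matrix

section single

variable {n ι α : Type*} [DecidableEq n] [Fintype ι] [AddCommMonoid α]

theorem sum_single_apply_of_injective {l : ι → n} (hl : Injective l)
    (g : ι → n) (c : α) (k : ι) (j : n) :
    (∑ k', single (l k') (g k') c) (l k) j = if g k = j then c else 0 := by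
  rw [sum_apply, sum_eq_single k (fun k' _ hk' ↦ ?_) (by simp)]
  · simp [single_apply]
  · exact single_apply_of_row_ne (hl.ne hk') _ _ _

theorem sum_single_apply_of_notMem_range {l : ι → n} (g : ι → n) (c : α)
    {i : n} (hi : i ∉ Set.range l) (j : n) :
    (∑ k, single (l k) (g k) c) i j = 0 := by
  rw [sum_apply]
  exact sum_eq_zero fun k _ ↦ single_apply_of_row_ne (fun h ↦ hi ⟨k, h⟩) _ _ _

theorem sum_single_one_apply_le {S : Matrix n n ℕ} {l : ι → n} (hl : Injective l) {g : ι → n}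
    (hS : ∀ k, S (l k) (g k) ≠ 0) (i j : n) :
    (∑ k, single (l k) (g k) 1) i j ≤ S i j := by
  by_cases hi : i ∈ Set.range l
  · obtain ⟨k, rfl⟩ := hi
    rw [sum_single_apply_of_injective hl]
    split_ifs with h
    · exact Nat.one_le_iff_ne_zero.mpr (h ▸ hS k)
    · exact Nat.zero_le _
  · simp [sum_single_apply_of_notMem_range g 1 hi]

end single

section IsBalanced

variable {n α : Type*} [Fintype n]

def IsBalanced [AddCommMonoid α] (S : Matrix n n α) : Prop :=
  ∀ μ, ∑ ν, S μ ν = ∑ ν, S ν μ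

theorem IsBalanced.of_add_left [AddCancelCommMonoid α] {C T : Matrix n n α}
    (hCT : IsBalanced (C + T)) (hC : IsBalanced C) : IsBalanced T := fun μ ↦ by
  have := hCT μ
  simp only [add_apply, sum_add_distrib, hC μ] at this
  exact add_left_cancel this

theorem IsBalanced.row_ne_zero [AddCommMonoid α] [Subsingleton (AddUnits α)] {S : Matrix n n α}
    (hS : IsBalanced S) {u v : n} (huv : S u v ≠ 0) : S v ≠ 0 := by
  intro hv
  have hcol : ∑ ν, S ν v = 0 := by simp [← hS v, hv]
  exact huv (sum_eq_zero_iff.mp hcol u (mem_univ u))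

theorem isBalanced_sum_single_perm [AddCommMonoid α] [DecidableEq n] {ι : Type*} [Fintype ι]
    (l : ι → n) (σ : Equiv.Perm ι) (c : α) :
    IsBalanced (∑ k, single (l k) (l (σ k)) c) := fun μ ↦ by
  simp only [sum_apply]
  rw [sum_comm, sum_comm (γ := n)]
  simp only [single_apply, ite_and, sum_ite_irrel, sum_ite_eq, mem_univ, ↓reduceIte,
    sum_const_zero]
  exact (Equiv.sum_comp σ fun k ↦ if l k = μ then c else 0).symm

end IsBalanced

end Matrix

open Matrix

theorem IsCycleMatrix.isBalanced {m : ℕ} {C : Matrix (Fin m) (Fin m) ℕ} (hC : IsCycleMatrix C) :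
    IsBalanced C := by
  obtain ⟨p, hp, l, -, rfl⟩ := hC
  have : NeZero p := ⟨by omega⟩
  exact isBalanced_sum_single_perm l (Equiv.addRight ⟨1, by omega⟩) 1

theorem IsCycleMatrix.ne_zero {m : ℕ} {C : Matrix (Fin m) (Fin m) ℕ} (hC : IsCycleMatrix C) :
    C ≠ 0 := by
  obtain ⟨p, hp, l, hl, rfl⟩ := hC
  intro h
  have := sum_single_apply_of_injective hl (fun k ↦ l (k + ⟨1, by omega⟩)) 1 ⟨0, by omega⟩
    (l (⟨0, by omega⟩ + ⟨1, by omega⟩))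
  simp [h] at this

theorem exists_isCycleMatrix_le {m : ℕ} {S : Matrix (Fin m) (Fin m) ℕ} (hdiag : ∀ i, S i i = 0)
    (hsums : IsBalanced S) (hS : S ≠ 0) :
    ∃ C, IsCycleMatrix C ∧ ∀ i j, C i j ≤ S i j := by
  obtain ⟨i, hi⟩ := Function.ne_iff.mp hS
  have : Nonempty {v // S v ≠ 0} := ⟨⟨i, hi⟩⟩
  have hsucc (v : {v // S v ≠ 0}) : ∃ w : {v // S v ≠ 0}, S v w ≠ 0 := by
    obtain ⟨j, hj⟩ := Function.ne_iff.mp v.2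
    exact ⟨⟨j, hsums.row_ne_zero hj⟩, hj⟩
  obtain ⟨p, hp, l, hl, hcycle⟩ := exists_injective_cycle hsucc fun v ↦ by simp [hdiag]
  have hl' : Injective (Subtype.val ∘ l) := Subtype.val_injective.comp hl
  exact ⟨_, ⟨p, hp, _, hl', rfl⟩, sum_single_one_apply_le hl' hcycle⟩

theorem gamma_generated_by_cycles {m : ℕ} (S : Matrix (Fin m) (Fin m) ℕ)
    (hdiag : ∀ i, S i i = 0)
    (hsums : ∀ μ, ∑ ν, S μ ν = ∑ ν, S ν μ) :
    S ∈ AddSubmonoid.closure {C : Matrix (Fin m) (Fin m) ℕ | IsCycleMatrix C} := by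
  induction hN : ∑ i, ∑ j, S i j using Nat.strong_induction_on generalizing S with
  | _ N ih =>
  obtain rfl | hS := eq_or_ne S 0
  · exact zero_mem _
  obtain ⟨C, hC, hCS⟩ := exists_isCycleMatrix_le hdiag hsums hS
  obtain ⟨T, rfl⟩ : ∃ T, S = C + T := ⟨S - C, by ext i j; simp [hCS i j]⟩
  have hT_diag (i : Fin m) : T i i = 0 := (add_eq_zero.mp (hdiag i)).2
  refine add_mem (AddSubmonoid.subset_closure hC)
    (ih _ ?_ T hT_diag (IsBalanced.of_add_left hsums hC.isBalanced) rfl)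
  have hC_pos : 0 < ∑ i, ∑ j, C i j := by
    obtain ⟨i, hi⟩ := Function.ne_iff.mp hC.ne_zero
    obtain ⟨j, hj⟩ := Function.ne_iff.mp hi
    exact sum_pos_iff.mpr ⟨i, mem_univ _, sum_pos_iff.mpr ⟨j, mem_univ _, Nat.pos_of_ne_zero hj⟩⟩
  simp only [← hN, Matrix.add_apply, sum_add_distrib]
  omega
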